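/- arXiv:2507.23557 — 2 statements merged into one kernel-verified Lean document; each statement's English description precedes it below -/
import Mathlib

section
/- As s → ∞, one has A_s ∼ (8/π) · 2^s / s³; that is, the sequence s ↦ A_s · s³ / 2^s tends to 8/π, where A_s = ∑_{(m₁,…,m_s) ∈ ℕ^s} Cat_{m₁} ⋯ Cat_{m_s} · Cat_{m₁+⋯+m_s} · 16^{−(m₁+⋯+m_s)}. -/
/-!
Wallis' integral `∫₀^{π/2} cos^{2M} θ sin² θ dθ = (π/4) Cat_M / 4^M` turns the factor
`Cat_M 16^{-M}`, `M = m₁ + ⋯ + m_s`, into an integral whose integrand factors over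
the `mᵢ`. Summing under the integral (Tonelli), each factor becomes the Catalan
generating function `∑ Cat_n xⁿ = 2 / (1 + √(1 - 4x))` at `x = cos² θ / 4`, that is
`2 / (1 + sin θ)`, so `A_s = (4/π) 2^s ∫₀^{π/2} sin² θ / (1 + sin θ)^s dθ`.
The substitution `θ = v / s` turns `s³` times this integral into
`∫₀^{sπ/2} (s sin (v/s))² / (1 + sin (v/s))^s dv`; the integrand tends to `v² e^{-v}`
and is dominated by `v² e^{-v/4}`, so the integral tends to `Γ(3) = 2`.
-/

open Real Filter

/-- The star sum `A_s = ∑_{m ∈ ℕ^s} Cat_{m₁}⋯Cat_{m_s} · Cat_{m₁+⋯+m_s} · 16^{−(m₁+⋯+m_s)}`. -/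
noncomputable def starSum (s : ℕ) : ℝ :=
  ∑' m : Fin s → ℕ,
    (∏ i, (catalan (m i) : ℝ)) * (catalan (∑ i, m i) : ℝ) * ((16 : ℝ) ^ (∑ i, m i))⁻¹

open Set MeasureTheory
open scoped ENNReal

theorem catalan_le_four_pow (n : ℕ) : (catalan n : ℝ) ≤ 4 ^ n := by
  have h : catalan n ≤ 4 ^ n := by
    rw [catalan_eq_centralBinom_div]
    exact (Nat.div_le_self _ _).trans (Nat.centralBinom_le_four_pow n)
  exact_mod_cast h

theorem summable_catalan_mul_pow {x : ℝ} (hx0 : 0 ≤ x) (hx : x < 1 / 4) :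
    Summable fun n => (catalan n : ℝ) * x ^ n := by
  refine (summable_geometric_of_lt_one (by positivity) (by linarith : 4 * x < 1)).of_nonneg_of_le
    (fun n => by positivity) fun n => ?_
  rw [mul_pow]
  exact mul_le_mul_of_nonneg_right (catalan_le_four_pow n) (by positivity)

theorem sum_range_catalan_div_four_pow (N : ℕ) :
    ∑ n ∈ Finset.range N, (catalan n : ℝ) / 4 ^ n = 2 - 2 * N.centralBinom / 4 ^ N := by
  induction N with
  | zero => simp
  | succ N ih =>
    have hcat : ((N : ℝ) + 1) * catalan N = N.centralBinom := by
      exact_mod_cast succ_mul_catalan_eq_centralBinom N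
    have hcb : ((N : ℝ) + 1) * (N + 1).centralBinom = 2 * (2 * N + 1) * N.centralBinom := by
      exact_mod_cast Nat.succ_mul_centralBinom_succ N
    have hstep : ((N + 1).centralBinom : ℝ) = 4 * N.centralBinom - 2 * catalan N := by
      refine mul_left_cancel₀ (by positivity : (N : ℝ) + 1 ≠ 0) ?_
      linear_combination hcb + 2 * hcat
    rw [Finset.sum_range_succ, ih, hstep, pow_succ]
    field_simp
    ring

theorem tsum_catalan_mul_pow {x : ℝ} (hx0 : 0 ≤ x) (hx : x < 1 / 4) :
    ∑' n, (catalan n : ℝ) * x ^ n = 2 / (1 + √(1 - 4 * x)) := by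
  set f : ℕ → ℝ := fun n => catalan n * x ^ n with hf_def
  have hf : Summable f := summable_catalan_mul_pow hx0 hx
  have hf_norm : Summable fun n => ‖f n‖ := hf.abs
  set C := ∑' n, f n
  have hsq : C * C = ∑' n, (catalan (n + 1) : ℝ) * x ^ n := by
    rw [tsum_mul_tsum_eq_tsum_sum_antidiagonal_of_summable_norm hf_norm hf_norm]
    refine tsum_congr fun n => ?_
    rw [catalan_succ', Nat.cast_sum, Finset.sum_mul]
    refine Finset.sum_congr rfl fun ij hij => ?_
    rw [← Finset.HasAntidiagonal.mem_antidiagonal.mp hij]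
    simp only [hf_def, Nat.cast_mul, pow_add]
    ring
  have hquad : x * C ^ 2 = C - 1 := by
    have hshift : C - 1 = ∑' n, f (n + 1) := by
      have h0 : C = f 0 + ∑' n, f (n + 1) := hf.tsum_eq_zero_add
      simp [h0, hf_def]
    rw [hshift, sq, hsq, ← tsum_mul_left]
    exact tsum_congr fun n => by simp only [hf_def, pow_succ]; ring
  have hC : C ≤ 2 := by
    refine Real.tsum_le_of_sum_range_le (fun n => by positivity) fun N => ?_
    calc ∑ n ∈ Finset.range N, f n ≤ ∑ n ∈ Finset.range N, (catalan n : ℝ) / 4 ^ n := by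
          refine Finset.sum_le_sum fun n _ => ?_
          rw [div_eq_mul_inv, ← inv_pow]
          change (catalan n : ℝ) * x ^ n ≤ _
          gcongr
          linarith
      _ ≤ 2 := by
          rw [sum_range_catalan_div_four_pow]
          linarith [show (0 : ℝ) ≤ 2 * N.centralBinom / 4 ^ N by positivity]
  -- `x C² - C + 1 = 0` has two roots; `C ≤ 2` picks the one with `1 - 2 x C ≥ 0`
  have hroot : √(1 - 4 * x) = 1 - 2 * x * C := by
    rw [Real.sqrt_eq_iff_mul_self_eq (by linarith) (by nlinarith)]
    linear_combination (-4 * x) * hquad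
  rw [hroot, eq_div_iff (by nlinarith)]
  linear_combination (-2) * hquad

theorem prod_range_div_eq_centralBinom_div (M : ℕ) :
    ∏ i ∈ Finset.range M, (2 * (i : ℝ) + 1) / (2 * i + 2) = M.centralBinom / 4 ^ M := by
  induction M with
  | zero => simp
  | succ M ih =>
    have hcb : ((M : ℝ) + 1) * (M + 1).centralBinom = 2 * (2 * M + 1) * M.centralBinom := by
      exact_mod_cast Nat.succ_mul_centralBinom_succ M
    rw [Finset.prod_range_succ, ih, pow_succ]
    field_simp
    linear_combination (-2) * hcb

theorem integral_cos_pow_two_mul (M : ℕ) :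
    ∫ θ in 0..π / 2, cos θ ^ (2 * M) = π / 2 * M.centralBinom / 4 ^ M := by
  rw [EulerSine.integral_cos_pow_eq, integral_sin_pow_even, prod_range_div_eq_centralBinom_div]
  ring

theorem integral_cos_pow_mul_sin_sq (M : ℕ) :
    ∫ θ in 0..π / 2, cos θ ^ (2 * M) * sin θ ^ 2 = π / 4 * catalan M / 4 ^ M := by
  have hred : ∫ θ in 0..π / 2, cos θ ^ (2 * M + 2) =
      (2 * M + 1) / (2 * M + 2) * ∫ θ in 0..π / 2, cos θ ^ (2 * M) := by
    rw [integral_cos_pow]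
    simp
  have hsplit : ∫ θ in 0..π / 2, cos θ ^ (2 * M) * sin θ ^ 2 =
      (∫ θ in 0..π / 2, cos θ ^ (2 * M)) - ∫ θ in 0..π / 2, cos θ ^ (2 * M + 2) := by
    rw [← intervalIntegral.integral_sub ((continuous_cos.fun_pow _).intervalIntegrable _ _)
      ((continuous_cos.fun_pow _).intervalIntegrable _ _)]
    refine intervalIntegral.integral_congr fun θ _ => ?_
    simp only [sin_sq, pow_add]
    ring
  have hcat : ((M : ℝ) + 1) * catalan M = M.centralBinom := by
    exact_mod_cast succ_mul_catalan_eq_centralBinom M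
  rw [hsplit, hred, integral_cos_pow_two_mul, ← hcat]
  field_simp
  ring

section StarKernel

variable {ι : Type*} [Fintype ι] (m : ι → ℕ)

noncomputable def starKernel (θ : ℝ) : ℝ :=
  4 / π * sin θ ^ 2 * ∏ i, (catalan (m i) : ℝ) * (cos θ ^ 2 / 4) ^ m i

theorem continuous_starKernel : Continuous (starKernel m) := by
  unfold starKernel
  fun_prop

theorem starKernel_nonneg (θ : ℝ) : 0 ≤ starKernel m θ := by
  unfold starKernel
  positivity

theorem catalan_prod_mul_catalan_sum_eq_integral_starKernel :
    (∏ i, (catalan (m i) : ℝ)) * (catalan (∑ i, m i) : ℝ) * ((16 : ℝ) ^ (∑ i, m i))⁻¹ =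
      ∫ θ in 0..π / 2, starKernel m θ := by
  set M := ∑ i, m i
  have hkernel : ∀ θ, starKernel m θ =
      4 / π * (∏ i, (catalan (m i) : ℝ)) / 4 ^ M * (cos θ ^ (2 * M) * sin θ ^ 2) := by
    intro θ
    rw [starKernel, Finset.prod_mul_distrib, Finset.prod_pow_eq_pow_sum, div_pow, ← pow_mul]
    ring
  simp_rw [hkernel]
  rw [intervalIntegral.integral_const_mul, integral_cos_pow_mul_sin_sq,
    show (16 : ℝ) ^ M = 4 ^ M * 4 ^ M by rw [← mul_pow]; norm_num]
  field_simp

end StarKernel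

theorem ENNReal.tsum_pi_prod_eq_pow {α : Type*} (g : α → ℝ≥0∞) (s : ℕ) :
    ∑' m : Fin s → α, ∏ i, g (m i) = (∑' a, g a) ^ s := by
  induction s with
  | zero => simp
  | succ s ih =>
    rw [← (Fin.consEquiv fun _ => α).tsum_eq, ENNReal.tsum_prod']
    simp [Fin.consEquiv, Fin.prod_univ_succ, ENNReal.tsum_mul_left, ENNReal.tsum_mul_right, ih,
      pow_succ']

theorem tsum_catalan_mul_cos_sq_div_four_pow {θ : ℝ} (hθ : θ ∈ Ioc 0 (π / 2)) :
    ∑' n, (catalan n : ℝ) * (cos θ ^ 2 / 4) ^ n = 2 / (1 + sin θ) := by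
  have hsin : 0 < sin θ := sin_pos_of_pos_of_lt_pi hθ.1 (by linarith [hθ.2, pi_pos])
  have hsin_sq : 1 - 4 * (cos θ ^ 2 / 4) = sin θ ^ 2 := by linarith [sin_sq_add_cos_sq θ]
  rw [tsum_catalan_mul_pow (by positivity) (by nlinarith), hsin_sq, sqrt_sq hsin.le]

theorem tsum_ofReal_starKernel (s : ℕ) {θ : ℝ} (hθ : θ ∈ Ioc 0 (π / 2)) :
    ∑' m : Fin s → ℕ, ENNReal.ofReal (starKernel m θ) =
      ENNReal.ofReal (4 / π * sin θ ^ 2 * (2 / (1 + sin θ)) ^ s) := by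
  have hsin : 0 < sin θ := sin_pos_of_pos_of_lt_pi hθ.1 (by linarith [hθ.2, pi_pos])
  have hsum : Summable fun n => (catalan n : ℝ) * (cos θ ^ 2 / 4) ^ n :=
    summable_catalan_mul_pow (by positivity) (by nlinarith [sin_sq_add_cos_sq θ])
  have hfactor : ∀ m : Fin s → ℕ, ENNReal.ofReal (starKernel m θ) =
      ENNReal.ofReal (4 / π * sin θ ^ 2) *
        ∏ i, ENNReal.ofReal ((catalan (m i) : ℝ) * (cos θ ^ 2 / 4) ^ m i) := fun m => by
    rw [starKernel, ENNReal.ofReal_mul (by positivity),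
      ENNReal.ofReal_prod_of_nonneg fun i _ => by positivity]
  rw [tsum_congr hfactor, ENNReal.tsum_mul_left,
    ENNReal.tsum_pi_prod_eq_pow fun n => ENNReal.ofReal ((catalan n : ℝ) * (cos θ ^ 2 / 4) ^ n),
    ← ENNReal.ofReal_tsum_of_nonneg (fun n => by positivity) hsum,
    tsum_catalan_mul_cos_sq_div_four_pow hθ, ← ENNReal.ofReal_pow (by positivity),
    ← ENNReal.ofReal_mul (by positivity)]

theorem ofReal_intervalIntegral_eq_setLIntegral {f : ℝ → ℝ} {a b : ℝ} (hab : a ≤ b)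
    (hf : IntegrableOn f (Ioc a b)) (hf0 : ∀ x ∈ Ioc a b, 0 ≤ f x) :
    ENNReal.ofReal (∫ x in a..b, f x) = ∫⁻ x in Ioc a b, ENNReal.ofReal (f x) := by
  rw [intervalIntegral.integral_of_le hab,
    ofReal_integral_eq_lintegral_ofReal hf (ae_restrict_of_forall_mem measurableSet_Ioc hf0)]

theorem tsum_ofReal_integral_starKernel (s : ℕ) :
    ∑' m : Fin s → ℕ, ENNReal.ofReal (∫ θ in 0..π / 2, starKernel m θ) =
      ENNReal.ofReal (∫ θ in 0..π / 2, 4 / π * sin θ ^ 2 * (2 / (1 + sin θ)) ^ s) := by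
  have hpi : 0 ≤ π / 2 := by positivity
  have hsin : ∀ θ ∈ Icc 0 (π / 2), 0 ≤ sin θ := fun θ hθ =>
    sin_nonneg_of_nonneg_of_le_pi hθ.1 (by linarith [hθ.2, pi_pos])
  have hlimit : IntegrableOn (fun θ => 4 / π * sin θ ^ 2 * (2 / (1 + sin θ)) ^ s)
      (Ioc 0 (π / 2)) := by
    refine (ContinuousOn.integrableOn_Icc ?_).mono_set Ioc_subset_Icc_self
    refine ContinuousOn.mul (by fun_prop) (.pow (.div (by fun_prop) (by fun_prop) ?_) _)
    intro θ hθ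
    linarith [hsin θ hθ]
  calc _ = ∑' m : Fin s → ℕ, ∫⁻ θ in Ioc 0 (π / 2), ENNReal.ofReal (starKernel m θ) :=
        tsum_congr fun m => ofReal_intervalIntegral_eq_setLIntegral hpi
          (continuous_starKernel m).integrableOn_Ioc fun θ _ => starKernel_nonneg m θ
    _ = ∫⁻ θ in Ioc 0 (π / 2), ∑' m : Fin s → ℕ, ENNReal.ofReal (starKernel m θ) :=
        (lintegral_tsum fun m =>
          (continuous_starKernel m).measurable.ennreal_ofReal.aemeasurable).symm
    _ = ∫⁻ θ in Ioc 0 (π / 2),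
          ENNReal.ofReal (4 / π * sin θ ^ 2 * (2 / (1 + sin θ)) ^ s) :=
        setLIntegral_congr_fun measurableSet_Ioc fun θ hθ => tsum_ofReal_starKernel s hθ
    _ = _ := (ofReal_intervalIntegral_eq_setLIntegral hpi hlimit fun θ hθ => by
        have := hsin θ (Ioc_subset_Icc_self hθ)
        positivity).symm

noncomputable def starIntegral (s : ℕ) : ℝ := ∫ θ in 0..π / 2, sin θ ^ 2 / (1 + sin θ) ^ s

theorem starSum_eq (s : ℕ) : starSum s = 4 / π * 2 ^ s * starIntegral s := by
  have hpi : 0 ≤ π / 2 := by positivity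
  have hlimit : ∫ θ in 0..π / 2, 4 / π * sin θ ^ 2 * (2 / (1 + sin θ)) ^ s =
      4 / π * 2 ^ s * starIntegral s := by
    rw [starIntegral, ← intervalIntegral.integral_const_mul]
    refine intervalIntegral.integral_congr fun θ _ => ?_
    simp only [div_pow]
    ring
  have hnonneg : 0 ≤ 4 / π * 2 ^ s * starIntegral s := by
    rw [← hlimit]
    refine intervalIntegral.integral_nonneg hpi fun θ hθ => ?_
    have := sin_nonneg_of_nonneg_of_le_pi hθ.1 (by linarith [hθ.2, pi_pos])
    positivity
  simp_rw [starSum, catalan_prod_mul_catalan_sum_eq_integral_starKernel]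
  rw [← ENNReal.toReal_ofReal hnonneg, ← hlimit, ← tsum_ofReal_integral_starKernel,
    ENNReal.tsum_toReal_eq fun _ => ENNReal.ofReal_ne_top]
  exact tsum_congr fun m => (ENNReal.toReal_ofReal
    (intervalIntegral.integral_nonneg hpi fun θ _ => starKernel_nonneg m θ)).symm

theorem tendsto_natCast_mul_sin_div (v : ℝ) :
    Tendsto (fun n : ℕ => n * sin (v / n)) atTop (nhds v) := by
  have h : Tendsto (fun n : ℕ => v * sinc (v / n)) atTop (nhds (v * sinc 0)) :=
    ((continuous_sinc.tendsto 0).comp (tendsto_const_div_atTop_nhds_zero_nat v)).const_mul v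
  rw [sinc_zero, mul_one] at h
  refine h.congr' ?_
  filter_upwards [eventually_ne_atTop 0] with n hn
  rcases eq_or_ne v 0 with rfl | hv
  · simp
  · rw [sinc_of_ne_zero (div_ne_zero hv (Nat.cast_ne_zero.mpr hn))]
    field_simp

theorem exp_le_one_add_sin_pow {t : ℝ} (ht0 : 0 ≤ t) (ht : t ≤ π / 2) (n : ℕ) :
    exp (n * t / 4) ≤ (1 + sin t) ^ n := by
  have hsin0 : 0 ≤ sin t := sin_nonneg_of_nonneg_of_le_pi ht0 (by linarith [pi_pos])
  have hlog : t / 4 ≤ log (1 + sin t) :=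
    calc t / 4 ≤ 2 / 3 * (2 / π * t) := by
          rw [← sub_nonneg]
          have : 2 / 3 * (2 / π * t) - t / 4 = t * (16 - 3 * π) / (12 * π) := by field_simp; ring
          rw [this]
          exact div_nonneg (mul_nonneg ht0 (by linarith [pi_le_four])) (by positivity)
      _ ≤ 2 / 3 * sin t := by gcongr; exact mul_le_sin ht0 ht
      _ ≤ 2 * sin t / (sin t + 2) := by
          rw [le_div_iff₀ (by positivity)]
          nlinarith [sin_le_one t]
      _ ≤ log (1 + sin t) := le_log_one_add_of_nonneg hsin0
  calc exp (n * t / 4) ≤ exp (n * log (1 + sin t)) := by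
        rw [mul_div_assoc]
        gcongr
    _ = (1 + sin t) ^ n := by rw [exp_nat_mul, exp_log (by positivity)]

noncomputable def scaledStarIntegrand (n : ℕ) : ℝ → ℝ :=
  (Ioc 0 (n * π / 2)).indicator fun v => (n * sin (v / n)) ^ 2 / (1 + sin (v / n)) ^ n

theorem natCast_pow_three_mul_starIntegral {n : ℕ} (hn : n ≠ 0) :
    (n : ℝ) ^ 3 * starIntegral n = ∫ v in Ioi 0, scaledStarIntegrand n v := by
  have hn' : (n : ℝ) ≠ 0 := Nat.cast_ne_zero.mpr hn
  have hsubst := intervalIntegral.integral_comp_div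
    (fun θ => sin θ ^ 2 / (1 + sin θ) ^ n) (a := 0) (b := n * π / 2) hn'
  rw [zero_div, show (n : ℝ) * π / 2 / n = π / 2 by field_simp, smul_eq_mul] at hsubst
  rw [scaledStarIntegrand, setIntegral_indicator measurableSet_Ioc,
    inter_eq_self_of_subset_right Ioc_subset_Ioi_self,
    ← intervalIntegral.integral_of_le (by positivity), starIntegral, pow_succ,
    mul_assoc, ← hsubst, ← intervalIntegral.integral_const_mul]
  refine intervalIntegral.integral_congr fun v _ => ?_
  simp only [mul_pow]
  ring

theorem tendsto_scaledStarIntegrand {v : ℝ} (hv : 0 < v) :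
    Tendsto (fun n => scaledStarIntegrand n v) atTop (nhds (v ^ 2 * exp (-v))) := by
  have hsin := tendsto_natCast_mul_sin_div v
  have hpow : Tendsto (fun n : ℕ => (1 + sin (v / n)) ^ n) atTop (nhds (exp v)) :=
    tendsto_one_add_pow_exp_of_tendsto hsin
  have hlim := (hsin.pow 2).div hpow (exp_pos v).ne'
  rw [exp_neg, ← div_eq_mul_inv]
  refine hlim.congr' ?_
  filter_upwards [tendsto_natCast_atTop_atTop.eventually_ge_atTop (2 * v / π)] with n hn
  rw [div_le_iff₀ pi_pos] at hn
  have hmem : v ∈ Ioc 0 (n * π / 2) := ⟨hv, by linarith⟩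
  rw [scaledStarIntegrand, indicator_of_mem hmem, Pi.div_apply]

theorem norm_scaledStarIntegrand_le (n : ℕ) (v : ℝ) :
    ‖scaledStarIntegrand n v‖ ≤ v ^ 2 * exp (-(v / 4)) := by
  by_cases hmem : v ∈ Ioc 0 (n * π / 2)
  swap
  · rw [scaledStarIntegrand, indicator_of_notMem hmem, norm_zero]
    positivity
  have hn : (0 : ℝ) < n := by
    by_contra! h
    nlinarith [hmem.1, hmem.2, pi_pos, (Nat.cast_nonneg n : (0 : ℝ) ≤ n)]
  set t := v / n
  have ht0 : 0 ≤ t := div_nonneg hmem.1.le hn.le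
  have ht : t ≤ π / 2 := by
    rw [div_le_iff₀ hn]
    linarith [hmem.2]
  have hv_eq : n * t = v := mul_div_cancel₀ v hn.ne'
  have hsin0 : 0 ≤ sin t := sin_nonneg_of_nonneg_of_le_pi ht0 (by linarith [pi_pos])
  have hnum : n * sin t ≤ v := hv_eq ▸ mul_le_mul_of_nonneg_left (sin_le ht0) hn.le
  have hden : exp (v / 4) ≤ (1 + sin t) ^ n := by
    rw [← hv_eq]
    exact exp_le_one_add_sin_pow ht0 ht n
  rw [scaledStarIntegrand, indicator_of_mem hmem, norm_of_nonneg (by positivity), exp_neg,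
    ← div_eq_mul_inv]
  gcongr

theorem integral_sq_mul_exp_neg : ∫ v in Ioi (0 : ℝ), v ^ 2 * exp (-v) = 2 := by
  have h := integral_rpow_mul_exp_neg_mul_Ioi (a := 3) (r := 1) (by norm_num) one_pos
  rw [show (3 : ℝ) = (2 : ℕ) + 1 by norm_num, Gamma_nat_eq_factorial] at h
  norm_num at h
  exact h

theorem tendsto_natCast_pow_three_mul_starIntegral :
    Tendsto (fun n : ℕ => (n : ℝ) ^ 3 * starIntegral n) atTop (nhds 2) := by
  have hmeas : ∀ n, AEStronglyMeasurable (scaledStarIntegrand n) (volume.restrict (Ioi 0)) :=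
    fun n => ((Measurable.indicator (by fun_prop) measurableSet_Ioc)).aestronglyMeasurable
  have hbound : Integrable (fun v => v ^ 2 * exp (-(v / 4))) (volume.restrict (Ioi 0)) := by
    refine (integrableOn_rpow_mul_exp_neg_mul_rpow (s := 2) (p := 1) (b := 1 / 4) (by norm_num)
      one_pos (by norm_num)).congr_fun (fun v _ => ?_) measurableSet_Ioi
    simp only [rpow_one, rpow_two]
    ring_nf
  have hdct := tendsto_integral_of_dominated_convergence _ hmeas hbound
    (fun n => ae_of_all _ (norm_scaledStarIntegrand_le n))
    (ae_restrict_of_forall_mem measurableSet_Ioi fun v hv => tendsto_scaledStarIntegrand hv)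
  rw [integral_sq_mul_exp_neg] at hdct
  refine hdct.congr' ?_
  filter_upwards [eventually_ne_atTop 0] with n hn
  exact (natCast_pow_three_mul_starIntegral hn).symm

/-- `A_s ∼ (8/π)·2^s/s³` as `s → ∞`. -/
theorem stmt_16 :
    Tendsto (fun s : ℕ => starSum s * (s : ℝ) ^ 3 / 2 ^ s) atTop (nhds (8 / π)) := by
  have h := tendsto_natCast_pow_three_mul_starIntegral.const_mul (4 / π)
  rw [show 4 / π * 2 = 8 / π by ring] at h
  refine h.congr fun s => ?_
  rw [starSum_eq]
  field_simp
end

section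
/- For every integer s ≥ 1, one has (2s+3)·A_{s+2} − 2(3s−2)·A_{s+1} + 4(s−2)·A_s = 0, where A_s = ∑_{(m₁,…,m_s) ∈ ℕ^s} Cat_{m₁} ⋯ Cat_{m_s} · Cat_{m₁+⋯+m_s} · 16^{−(m₁+⋯+m_s)}. -/
/-!
Writing `K_s(n) = [xⁿ] C(x)^s` for the Catalan series `C`, grouping the terms of `A_s` by
`m₁ + ⋯ + m_s = n` gives `A_s = ∑ₙ a_s(n)` with `a_s(n) = K_s(n) Cat_n 16⁻ⁿ`. From `C = 1 + x C²`
one gets the ballot formula `(2n + s) K_s(n) = s binom(2n+s, n)`, so `a_s(n)` is hypergeometric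
in both `s` and `n`, and Zeilberger's algorithm produces the certificate `G_s(n)` (`starGosper`):
the recurrence applied to `a_·(n)` equals `G_s(n+1) - G_s(n)`. Summing over `n` telescopes to
`lim G_s - G_s(0) = 0`, because `G_s(0) = 0` and `a_s(n) = O(n⁻²)`.
-/

open Real

open Finset Filter Topology PowerSeries

theorem add_two_mul_catalan_succ (n : ℕ) :
    (n + 2) * catalan (n + 1) = 2 * (2 * n + 1) * catalan n := by
  apply Nat.eq_of_mul_eq_mul_left n.succ_pos
  calc (n + 1) * ((n + 2) * catalan (n + 1)) = (n + 1) * (n + 1).centralBinom := by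
        rw [← succ_mul_catalan_eq_centralBinom]
    _ = (n + 1) * (2 * (2 * n + 1) * catalan n) := by
        rw [Nat.succ_mul_centralBinom_succ, ← succ_mul_catalan_eq_centralBinom]; ring

theorem coeff_catalanSeries_pow (s n : ℕ) :
    coeff n (catalanSeries ^ s) = ∑ m ∈ Nat.antidiagonalTuple s n, ∏ i, catalan (m i) := by
  classical
  rw [← Fin.prod_const, coeff_prod, finsuppAntidiag, sum_map,
    ← piAntidiag_univ_fin_eq_antidiagonalTuple, ← sum_attach (piAntidiag univ n)]
  simp

theorem coeff_succ_catalanSeries_pow_succ (s n : ℕ) :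
    coeff (n + 1) (catalanSeries ^ (s + 1)) =
      coeff (n + 1) (catalanSeries ^ s) + coeff n (catalanSeries ^ (s + 2)) := by
  have h : catalanSeries ^ (s + 1) = catalanSeries ^ s + catalanSeries ^ (s + 2) * X := by
    calc catalanSeries ^ (s + 1) = catalanSeries ^ s * (catalanSeries ^ 2 * X + 1) := by
          rw [catalanSeries_sq_mul_X_add_one, pow_succ]
      _ = catalanSeries ^ s + catalanSeries ^ (s + 2) * X := by ring
  rw [h, map_add, coeff_succ_mul_X]

theorem add_mul_coeff_catalanSeries_pow (s n : ℕ) :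
    (2 * n + s) * coeff n (catalanSeries ^ s) = s * (2 * n + s).choose n := by
  induction n generalizing s with
  | zero => simp [coeff_zero_eq_constantCoeff]
  | succ n ihn =>
    induction s with
    | zero => simp [coeff_one]
    | succ s ihs =>
      have hn := ihn (s + 2)
      have hsym := Nat.choose_succ_right_eq (2 * n + s + 2) n
      rw [show 2 * n + s + 2 - n = n + s + 2 by omega] at hsym
      rw [show 2 * (n + 1) + s = 2 * n + s + 2 by ring] at ihs
      rw [show 2 * n + (s + 2) = 2 * n + s + 2 by ring] at hn
      rw [show 2 * (n + 1) + (s + 1) = 2 * n + s + 2 + 1 by ring, Nat.choose_succ_succ,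
        coeff_succ_catalanSeries_pow_succ]
      refine Nat.eq_of_mul_eq_mul_left (show 0 < (2 * n + s + 2) * (n + 1) by positivity) ?_
      linear_combination (2 * n + s + 3) * (n + 1) * (ihs + hn) + 2 * (n + 1) * hsym.symm

theorem mul_coeff_catalanSeries_pow_succ (s n : ℕ) :
    s * (n + s + 1) * coeff n (catalanSeries ^ (s + 1)) =
      (s + 1) * (2 * n + s) * coeff n (catalanSeries ^ s) := by
  have h₀ := add_mul_coeff_catalanSeries_pow s n
  have h₁ := add_mul_coeff_catalanSeries_pow (s + 1) n
  have hc := Nat.choose_mul_succ_eq (2 * n + s) n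
  rw [show 2 * n + s + 1 - n = n + s + 1 by omega] at hc
  rw [← add_assoc] at h₁
  refine Nat.eq_of_mul_eq_mul_left (show 0 < 2 * n + s + 1 by omega) ?_
  linear_combination s * (n + s + 1) * h₁ + (2 * n + s + 1) * (s + 1) * h₀.symm +
    s * (s + 1) * hc.symm

theorem mul_coeff_succ_catalanSeries_pow (s n : ℕ) :
    (n + 1) * (n + s + 1) * coeff (n + 1) (catalanSeries ^ s) =
      (2 * n + s) * (2 * n + s + 1) * coeff n (catalanSeries ^ s) := by
  have h₀ := add_mul_coeff_catalanSeries_pow s n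
  have h₁ := add_mul_coeff_catalanSeries_pow s (n + 1)
  have hc₁ := Nat.add_one_mul_choose_eq (2 * n + s + 1) n
  have hc₂ := Nat.choose_mul_succ_eq (2 * n + s) n
  rw [show 2 * n + s + 1 - n = n + s + 1 by omega] at hc₂
  rw [show 2 * (n + 1) + s = 2 * n + s + 1 + 1 by ring] at h₁
  refine Nat.eq_of_mul_eq_mul_left (show 0 < 2 * n + s + 2 by omega) ?_
  linear_combination (n + 1) * (n + s + 1) * h₁ + (2 * n + s + 1) * (2 * n + s + 2) * h₀.symm +
    s * (n + s + 1) * hc₁.symm + s * (2 * n + s + 2) * hc₂.symm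

noncomputable def starTerm (s n : ℕ) : ℝ :=
  coeff n (catalanSeries ^ s) * catalan n * ((16 : ℝ) ^ n)⁻¹

theorem starTerm_nonneg (s n : ℕ) : 0 ≤ starTerm s n := by
  unfold starTerm; positivity

theorem add_one_sq_mul_starTerm_le {s : ℕ} (hs : 0 < s) (n : ℕ) :
    ((n : ℝ) + 1) ^ 2 * starTerm s n ≤ s * 2 ^ s := by
  have hcoeff : (n + 1) * coeff n (catalanSeries ^ s) ≤ s * 2 ^ (2 * n + s) :=
    calc (n + 1) * coeff n (catalanSeries ^ s)
        ≤ (2 * n + s) * coeff n (catalanSeries ^ s) := Nat.mul_le_mul_right _ (by omega)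
      _ = s * (2 * n + s).choose n := add_mul_coeff_catalanSeries_pow s n
      _ ≤ s * 2 ^ (2 * n + s) := by gcongr; exact Nat.choose_le_two_pow _ _
  have hcat : (n + 1) * catalan n ≤ 4 ^ n :=
    (succ_mul_catalan_eq_centralBinom n).trans_le (Nat.centralBinom_le_four_pow n)
  have hnat : (n + 1) * coeff n (catalanSeries ^ s) * ((n + 1) * catalan n) ≤
      s * 2 ^ s * 16 ^ n :=
    calc _ ≤ s * 2 ^ (2 * n + s) * 4 ^ n := Nat.mul_le_mul hcoeff hcat
      _ = s * 2 ^ s * 16 ^ n := by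
        rw [pow_add, pow_mul, show 16 = 2 ^ 2 * 4 by rfl, mul_pow]; ring
  have hreal : ((n : ℝ) + 1) * coeff n (catalanSeries ^ s) * (((n : ℝ) + 1) * catalan n) ≤
      s * 2 ^ s * 16 ^ n := by exact_mod_cast hnat
  calc ((n : ℝ) + 1) ^ 2 * starTerm s n
      = ((n : ℝ) + 1) * coeff n (catalanSeries ^ s) * (((n : ℝ) + 1) * catalan n) *
          ((16 : ℝ) ^ n)⁻¹ := by unfold starTerm; ring
    _ ≤ s * 2 ^ s * 16 ^ n * ((16 : ℝ) ^ n)⁻¹ := by gcongr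
    _ = s * 2 ^ s := by field_simp

theorem summable_starTerm {s : ℕ} (hs : 0 < s) : Summable (starTerm s) := by
  have hbound (n : ℕ) : starTerm s n ≤ s * 2 ^ s * (((n : ℝ) + 1) ^ 2)⁻¹ := by
    rw [← div_eq_mul_inv, le_div_iff₀ (by positivity), mul_comm]
    exact add_one_sq_mul_starTerm_le hs n
  refine .of_nonneg_of_le (starTerm_nonneg s) hbound (Summable.mul_left _ ?_)
  exact_mod_cast (summable_nat_add_iff 1).mpr (Real.summable_nat_pow_inv.mpr one_lt_two)

theorem starSum_eq_tsum_starTerm {s : ℕ} (hs : 0 < s) : starSum s = ∑' n, starTerm s n := by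
  set e := Nat.sigmaAntidiagonalTupleEquivTuple s
  set f : (Fin s → ℕ) → ℝ := fun m =>
    (∏ i, (catalan (m i) : ℝ)) * (catalan (∑ i, m i) : ℝ) * ((16 : ℝ) ^ (∑ i, m i))⁻¹
  have hfiber (n : ℕ) : ∑' m : Nat.antidiagonalTuple s n, f (e ⟨n, m⟩) = starTerm s n := by
    rw [tsum_fintype, starTerm, coeff_catalanSeries_pow, Nat.cast_sum, sum_mul, sum_mul,
      ← sum_coe_sort (Nat.antidiagonalTuple s n)]
    refine Fintype.sum_congr _ _ fun ⟨m, hm⟩ => ?_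
    rw [Nat.mem_antidiagonalTuple] at hm
    simp [f, e, hm, mul_assoc]
  have hf_nonneg (p : Σ n, Nat.antidiagonalTuple s n) : 0 ≤ f (e p) := by
    simp only [f]; positivity
  have hsummable : Summable fun p => f (e p) :=
    (summable_sigma_of_nonneg hf_nonneg).mpr
      ⟨fun _ => .of_finite, (summable_starTerm hs).congr fun n => (hfiber n).symm⟩
  rw [starSum, ← e.tsum_eq]
  change ∑' p, f (e p) = _
  rw [hsummable.tsum_sigma' fun _ => .of_finite]
  exact tsum_congr hfiber

theorem mul_starTerm_succ_left (s n : ℕ) :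
    s * (n + s + 1) * starTerm (s + 1) n = (s + 1) * (2 * n + s) * starTerm s n := by
  have h : (s * (n + s + 1) * coeff n (catalanSeries ^ (s + 1)) : ℝ) =
      (s + 1) * (2 * n + s) * coeff n (catalanSeries ^ s) := by
    exact_mod_cast mul_coeff_catalanSeries_pow_succ s n
  unfold starTerm
  linear_combination catalan n * ((16 : ℝ) ^ n)⁻¹ * h

theorem mul_starTerm_succ_right (s n : ℕ) :
    16 * (n + 1) * (n + 2) * (n + s + 1) * starTerm s (n + 1) =
      2 * (2 * n + 1) * (2 * n + s) * (2 * n + s + 1) * starTerm s n := by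
  have hK : ((n + 1) * (n + s + 1) * coeff (n + 1) (catalanSeries ^ s) : ℝ) =
      (2 * n + s) * (2 * n + s + 1) * coeff n (catalanSeries ^ s) := by
    exact_mod_cast mul_coeff_succ_catalanSeries_pow s n
  have hC : ((n + 2) * catalan (n + 1) : ℝ) = 2 * (2 * n + 1) * catalan n := by
    exact_mod_cast add_two_mul_catalan_succ n
  unfold starTerm
  rw [pow_succ, mul_inv]
  linear_combination ((16 : ℝ) ^ n)⁻¹ * ((n + 2) * catalan (n + 1) * hK +
    (2 * n + s) * (2 * n + s + 1) * ((coeff n (catalanSeries ^ s) : ℕ) : ℝ) * hC)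

noncomputable def starGosper (s n : ℕ) : ℝ :=
  -8 * (s + 2) * n * (n + 1) / (s * (n + s + 1)) * starTerm s n

theorem starTerm_recurrence_eq_sub_starGosper {s : ℕ} (hs : 0 < s) (n : ℕ) :
    (2 * (s : ℝ) + 3) * starTerm (s + 2) n - 2 * (3 * (s : ℝ) - 2) * starTerm (s + 1) n +
        4 * ((s : ℝ) - 2) * starTerm s n = starGosper s (n + 1) - starGosper s n := by
  have hs' : (0 : ℝ) < s := by exact_mod_cast hs
  have h₁ : starTerm (s + 1) n = (s + 1) * (2 * n + s) / (s * (n + s + 1)) * starTerm s n := by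
    rw [div_mul_eq_mul_div, eq_div_iff (by positivity)]
    linear_combination mul_starTerm_succ_left s n
  have h₂ : starTerm (s + 2) n =
      (s + 2) * (2 * n + s + 1) / ((s + 1) * (n + s + 2)) * starTerm (s + 1) n := by
    rw [div_mul_eq_mul_div, eq_div_iff (by positivity)]
    have := mul_starTerm_succ_left (s + 1) n
    push_cast at this
    linear_combination this
  have h₃ : starTerm s (n + 1) = 2 * (2 * n + 1) * (2 * n + s) * (2 * n + s + 1) /
      (16 * (n + 1) * (n + 2) * (n + s + 1)) * starTerm s n := by
    rw [div_mul_eq_mul_div, eq_div_iff (by positivity)]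
    linear_combination mul_starTerm_succ_right s n
  rw [starGosper, starGosper, h₂, h₁, h₃]
  push_cast
  field_simp
  ring

theorem tendsto_starGosper_atTop {s : ℕ} (hs : 0 < s) :
    Tendsto (starGosper s) atTop (𝓝 0) := by
  have hs' : (0 : ℝ) < s := by exact_mod_cast hs
  have hbound (n : ℕ) : ‖starGosper s n‖ ≤ 8 * (s + 2) * 2 ^ s * (1 / ((n : ℝ) + 1)) := by
    have hG : starGosper s n = -(8 * (s + 2) / (s * (n + 1)) * (n / (n + s + 1)) *
        (((n : ℝ) + 1) ^ 2 * starTerm s n)) := by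
      unfold starGosper; field_simp
    have hterm₀ : 0 ≤ ((n : ℝ) + 1) ^ 2 * starTerm s n :=
      mul_nonneg (by positivity) (starTerm_nonneg s n)
    rw [hG, norm_neg, Real.norm_of_nonneg (by positivity)]
    calc 8 * (s + 2) / (s * (n + 1)) * (n / (n + s + 1)) * (((n : ℝ) + 1) ^ 2 * starTerm s n)
        ≤ 8 * (s + 2) / (s * (n + 1)) * 1 * (s * 2 ^ s) := by
          have hfrac : (n : ℝ) / (n + s + 1) ≤ 1 := div_le_one_of_le₀ (by linarith) (by positivity)
          have hterm := add_one_sq_mul_starTerm_le hs n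
          gcongr _ * ?_ * ?_
      _ = 8 * (s + 2) * 2 ^ s * (1 / ((n : ℝ) + 1)) := by field_simp
  refine squeeze_zero_norm hbound ?_
  simpa using tendsto_one_div_add_atTop_nhds_zero_nat.const_mul (8 * ((s : ℝ) + 2) * 2 ^ s)

theorem Summable.hasSum_sub_of_tendsto {G : Type*} [AddCommGroup G] [TopologicalSpace G]
    [IsTopologicalAddGroup G] [T2Space G] {f : ℕ → G} {l : G}
    (hsum : Summable fun n => f (n + 1) - f n) (hf : Tendsto f atTop (𝓝 l)) :
    HasSum (fun n => f (n + 1) - f n) (l - f 0) := by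
  rw [hsum.hasSum_iff_tendsto_nat]
  simp_rw [sum_range_sub]
  exact hf.sub_const _

/-- For `s ≥ 1`, `(2s+3)A_{s+2} − 2(3s−2)A_{s+1} + 4(s−2)A_s = 0`. -/
theorem stmt_18 (s : ℕ) (hs : 1 ≤ s) :
    (2 * (s : ℝ) + 3) * starSum (s + 2) - 2 * (3 * (s : ℝ) - 2) * starSum (s + 1) +
        4 * ((s : ℝ) - 2) * starSum s = 0 := by
  have hsum := (((summable_starTerm (s := s + 2) (by omega)).hasSum.mul_left (2 * (s : ℝ) + 3)).sub
    ((summable_starTerm (s := s + 1) (by omega)).hasSum.mul_left (2 * (3 * (s : ℝ) - 2)))).add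
    ((summable_starTerm hs).hasSum.mul_left (4 * ((s : ℝ) - 2)))
  simp_rw [starTerm_recurrence_eq_sub_starGosper hs] at hsum
  rw [starSum_eq_tsum_starTerm hs, starSum_eq_tsum_starTerm (by omega),
    starSum_eq_tsum_starTerm (by omega)]
  refine hsum.unique ?_
  simpa [starGosper] using hsum.summable.hasSum_sub_of_tendsto (tendsto_starGosper_atTop hs)
end
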